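/- If a chain code U satisfies qturn(P) ∈ {-1, 0, 1} for every prefix P of U, then the y-coordinates along its unfolding dual path are weakly monotonically nondecreasing. -/

import Mathlib

inductive TurnSym : Type
  | L | R | S
deriving DecidableEq

def qt : TurnSym → ℤ
  | TurnSym.L => -1
  | TurnSym.R => 1
  | TurnSym.S => 0

def qturn (U : List TurnSym) : ℤ := (U.map qt).sum

def rot : TurnSym → ℤ × ℤ → ℤ × ℤ
  | TurnSym.R, d => (d.2, -d.1)
  | TurnSym.L, d => (-d.2, d.1)
  | TurnSym.S, d => d

def pathStep (s : (ℤ × ℤ) × (ℤ × ℤ)) (a : TurnSym) : (ℤ × ℤ) × (ℤ × ℤ) :=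
  let d := rot a s.2
  (s.1 + d, d)

/-- Points p_0 = (0,0), p_1 = (0,1), ..., p_{n+1} of the unfolding dual path. -/
def pts (U : List TurnSym) : List (ℤ × ℤ) :=
  (0, 0) :: (List.scanl pathStep ((0, 1), (0, 1)) U).map Prod.fst

/-- 90° clockwise rotation. -/
def cw (d : ℤ × ℤ) : ℤ × ℤ := (d.2, -d.1)

/-- Final heading after processing a chain code from initial heading (0,1). -/
def headAfter (U : List TurnSym) : ℤ × ℤ := U.foldl (fun d a => rot a d) (0, 1)

/-- Reflection of a chain code: swap L and R. -/
def reflCode (U : List TurnSym) : List TurnSym :=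
  U.map fun a => match a with
    | TurnSym.L => TurnSym.R
    | TurnSym.R => TurnSym.L
    | TurnSym.S => TurnSym.S

/-- Action of a chain code on an arbitrary initial heading. -/
def act (U : List TurnSym) (d : ℤ × ℤ) : ℤ × ℤ := U.foldl (fun d a => rot a d) d


/-!
The heading after a prefix `P` is the one obtained from `(0, 1)` by `qturn P` clockwise quarter
turns, so it only depends on `qturn P` modulo 4. When `qturn P ∈ {-1, 0, 1}` that heading is west,
north or east, never south, and each step of the path adds the current heading to the position.
-/

def heading (k : ZMod 4) : ℤ × ℤ := ![(0, 1), (1, 0), (0, -1), (-1, 0)] k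

theorem rot_heading (a : TurnSym) (k : ZMod 4) : rot a (heading k) = heading (k + qt a) := by
  cases a <;> decide +revert

theorem act_cons (a : TurnSym) (U : List TurnSym) (d : ℤ × ℤ) :
    act (a :: U) d = act U (rot a d) :=
  rfl

theorem qturn_cons (a : TurnSym) (U : List TurnSym) : qturn (a :: U) = qt a + qturn U := by
  simp [qturn]

theorem act_heading (U : List TurnSym) (k : ZMod 4) :
    act U (heading k) = heading (k + qturn U) := by
  induction U generalizing k with
  | nil => simp [act, qturn]
  | cons a U ih =>
    rw [act_cons, rot_heading, ih, qturn_cons, Int.cast_add, add_assoc]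

theorem heading_intCast_snd_nonneg {n : ℤ} (hn : n ∈ ({-1, 0, 1} : Set ℤ)) :
    0 ≤ (heading n).2 := by
  rcases hn with rfl | rfl | rfl <;> decide

theorem isChain_scanl_pathStep (s : (ℤ × ℤ) × (ℤ × ℤ)) (U : List TurnSym)
    (h : ∀ P, P <+: U → P ≠ [] → 0 ≤ (act P s.2).2) :
    List.IsChain (fun p q : ℤ × ℤ => p.2 ≤ q.2) ((List.scanl pathStep s U).map Prod.fst) := by
  induction U generalizing s with
  | nil => simp
  | cons a U ih =>
    rw [List.scanl_cons, List.map_cons]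
    refine .cons (ih _ fun P hP _ => h (a :: P) (List.prefix_cons_inj a |>.2 hP) (by simp)) ?_
    have hstep : 0 ≤ (rot a s.2).2 := h [a] (by simp) (by simp)
    simp only [List.head?_map, List.head?_scanl, Option.map_some, Option.mem_some_iff, forall_eq']
    change s.1.2 ≤ s.1.2 + (rot a s.2).2
    omega

theorem stmt1 (U : List TurnSym)
    (h : ∀ P, P <+: U → qturn P ∈ ({-1, 0, 1} : Set ℤ)) :
    List.Chain' (fun p q : ℤ × ℤ => p.2 ≤ q.2) (pts U) := by
  have hstart : (((0, 1), (0, 1)) : (ℤ × ℤ) × (ℤ × ℤ)) = ((0, 1), heading 0) := rfl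
  refine .cons (isChain_scanl_pathStep _ U fun P hP _ => ?_) ?_
  · rw [hstart, act_heading, zero_add]
    exact heading_intCast_snd_nonneg (h P hP)
  · simp [List.head?_scanl]
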